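/- The double-sum formula for the normalized colored Jones polynomial of the figure-eight knot equals the Habiro/Masbaum single-sum formula: for every nonnegative integer n, ∑_{0 ≤ d₂ ≤ d₁ ≤ n} (-1)^{d₁+d₂} q^{d₂(d₂-2d₁-2n-3)/2 + d₁(d₁+1)/2} (q)_{d₁}(q)_n / ((q)_{d₂}(q)_{d₁-d₂}(q)_{n-d₁}) = ∑_{d₁=0}^{n} q^{-(n+1)d₁} (q^{n+2};q)_{d₁} (q^{n-d₁+1};q)_{d₁}. -/

import Mathlib

/-- `(q)_m = (q;q)_m = ∏_{k=1}^m (1 - q^k)`. -/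
noncomputable def qfac (q : ℂ) (m : ℕ) : ℂ := ∏ k ∈ Finset.range m, (1 - q ^ (k + 1))

/-- `(x;q)_n = ∏_{k=0}^{n-1} (1 - x q^k)`. -/
noncomputable def qPochNat (x q : ℂ) (n : ℕ) : ℂ := ∏ k ∈ Finset.range n, (1 - x * q ^ k)

/-!
For fixed `d₁` the inner sum over `d₂` is, after pulling out `(q)_n / (q)_{n-d₁} =
(q^{n-d₁+1};q)_{d₁}`, a Cauchy `q`-binomial sum with `x = q^{-(d₁+n+1)}`, hence equals
`(q^{-(d₁+n+1)};q)_{d₁}`. Reversing the order of the factors of this product turns it into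
`(q^{n+2};q)_{d₁}` times a monomial, and the monomials combine to `q^{-(n+1)d₁}`.
-/

open Finset

section QAnalogues

variable (q : ℂ)

@[simp]
theorem qfac_zero : qfac q 0 = 1 := prod_range_zero _

theorem qfac_succ (m : ℕ) : qfac q (m + 1) = qfac q m * (1 - q ^ (m + 1)) :=
  prod_range_succ _ _

@[simp]
theorem qPochNat_zero (x : ℂ) : qPochNat x q 0 = 1 := prod_range_zero _

theorem qPochNat_succ (x : ℂ) (n : ℕ) : qPochNat x q (n + 1) = qPochNat x q n * (1 - x * q ^ n) :=
  prod_range_succ _ _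

theorem qPochNat_succ' (x : ℂ) (n : ℕ) :
    qPochNat x q (n + 1) = (1 - x) * qPochNat (x * q) q n := by
  rw [qPochNat, prod_range_succ', mul_comm]
  simp only [qPochNat, pow_zero, mul_one, pow_succ', mul_assoc]

theorem qfac_add (m j : ℕ) : qfac q (m + j) = qfac q m * qPochNat (q ^ (m + 1)) q j := by
  induction j with
  | zero => simp
  | succ j ih =>
    rw [← add_assoc, qfac_succ, ih, qPochNat_succ]
    ring

theorem qfac_div_qfac_sub {n d : ℕ} (hd : d ≤ n) (h : qfac q (n - d) ≠ 0) :
    qfac q n / qfac q (n - d) = qPochNat (q ^ (n - d + 1)) q d := by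
  rw [div_eq_iff h, mul_comm, ← qfac_add, Nat.sub_add_cancel hd]

/-- The Gaussian binomial coefficient, defined by the `q`-Pascal recursion rather than as a
quotient of `qfac`s, so that it makes sense for every `q` and vanishes for `j > k`. -/
def qbinom : ℕ → ℕ → ℂ
  | _, 0 => 1
  | 0, _ + 1 => 0
  | k + 1, j + 1 => q ^ (j + 1) * qbinom k (j + 1) + qbinom k j

@[simp]
theorem qbinom_zero_right (k : ℕ) : qbinom q k 0 = 1 := by
  cases k <;> rfl

theorem qbinom_succ_succ (k j : ℕ) :
    qbinom q (k + 1) (j + 1) = q ^ (j + 1) * qbinom q k (j + 1) + qbinom q k j := rfl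

theorem qbinom_eq_zero_of_lt {k j : ℕ} (h : k < j) : qbinom q k j = 0 := by
  induction k generalizing j with
  | zero => obtain ⟨j, rfl⟩ := Nat.exists_eq_succ_of_ne_zero h.ne'; rfl
  | succ k ih =>
    obtain ⟨j, rfl⟩ := Nat.exists_eq_succ_of_ne_zero (Nat.ne_zero_of_lt h)
    rw [qbinom_succ_succ, ih (by omega), ih (by omega), mul_zero, add_zero]

@[simp]
theorem qbinom_self (k : ℕ) : qbinom q k k = 1 := by
  induction k with
  | zero => rfl
  | succ k ih => rw [qbinom_succ_succ, qbinom_eq_zero_of_lt q k.lt_succ_self, ih, mul_zero, zero_add]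

theorem qbinom_mul_qfac_mul_qfac {k j : ℕ} (h : j ≤ k) :
    qbinom q k j * (qfac q j * qfac q (k - j)) = qfac q k := by
  induction k generalizing j with
  | zero => obtain rfl := Nat.le_zero.mp h; simp
  | succ k ih =>
    rcases j with _ | j
    · simp
    obtain rfl | hjk := (Nat.succ_le_succ_iff.mp h).eq_or_lt
    · simp
    obtain ⟨e, rfl⟩ := Nat.exists_eq_add_of_lt hjk
    have h₁ := ih (j := j + 1) (by omega)
    have h₂ := ih (j := j) (by omega)
    rw [show j + e + 1 - (j + 1) = e by omega] at h₁
    rw [show j + e + 1 - j = e + 1 by omega] at h₂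
    rw [show j + e + 1 + 1 - (j + 1) = e + 1 by omega, qbinom_succ_succ]
    simp only [qfac_succ] at h₁ h₂ ⊢
    linear_combination q ^ (j + 1) * (1 - q ^ (e + 1)) * h₁ + (1 - q ^ (j + 1)) * h₂

theorem qbinom_eq_div {k j : ℕ} (h : j ≤ k) (hj : qfac q j ≠ 0) (hkj : qfac q (k - j) ≠ 0) :
    qbinom q k j = qfac q k / (qfac q j * qfac q (k - j)) := by
  rw [eq_div_iff (mul_ne_zero hj hkj), qbinom_mul_qfac_mul_qfac q h]

/-- Cauchy's `q`-binomial theorem. -/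
theorem sum_qbinom_mul_pow (k : ℕ) (x : ℂ) :
    ∑ j ∈ range (k + 1), (-1) ^ j * q ^ j.choose 2 * x ^ j * qbinom q k j = qPochNat x q k := by
  induction k generalizing x with
  | zero => simp
  | succ k ih =>
    set f : ℕ → ℂ := fun j => (-1) ^ j * q ^ j.choose 2 * (x * q) ^ j * qbinom q k j
    have hpascal : ∀ j ∈ range (k + 1),
        (-1) ^ (j + 1) * q ^ (j + 1).choose 2 * x ^ (j + 1) * qbinom q (k + 1) (j + 1) =
          f (j + 1) - x * f j := by
      intro j _
      simp only [f, qbinom_succ_succ, Nat.choose_succ_succ', Nat.choose_one_right]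
      ring
    have hshift : ∑ j ∈ range (k + 1), f (j + 1) = qPochNat (x * q) q k - 1 := by
      have h := sum_range_succ' f (k + 1)
      have hlast : f (k + 1) = 0 := by simp [f, qbinom_eq_zero_of_lt q k.lt_succ_self]
      rw [sum_range_succ, hlast, ih] at h
      simp only [add_zero, pow_zero, Nat.choose_zero_succ, mul_one, qbinom_zero_right, f] at h
      linear_combination -h
    rw [sum_range_succ', sum_congr rfl hpascal, sum_sub_distrib, ← mul_sum, hshift, ih,
      qPochNat_succ']
    simp only [pow_zero, Nat.choose_zero_succ, mul_one, qbinom_zero_right]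
    ring

end QAnalogues

theorem pow_mul_qPochNat_inv_pow {q : ℂ} (hq : q ≠ 0) {d N : ℕ} (hdN : d ≤ N) :
    q ^ (d * N) * qPochNat (q ^ N)⁻¹ q d =
      (-1) ^ d * q ^ d.choose 2 * qPochNat (q ^ (N - d + 1)) q d := by
  induction d with
  | zero => simp
  | succ d ih =>
    have hN : q ^ d * q ^ (N - d) = q ^ N := by rw [← pow_add, Nat.add_sub_cancel' (by omega)]
    have hshift : qPochNat (q ^ (N - (d + 1) + 1)) q (d + 1) =
        (1 - q ^ (N - d)) * qPochNat (q ^ (N - d + 1)) q d := by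
      rw [qPochNat_succ', ← pow_succ, show N - (d + 1) + 1 = N - d by omega]
    have hcancel : q ^ N * (1 - (q ^ N)⁻¹ * q ^ d) = q ^ N - q ^ d := by
      rw [mul_sub, mul_one, mul_inv_cancel_left₀ (pow_ne_zero _ hq)]
    rw [hshift, qPochNat_succ, Nat.choose_succ_succ', Nat.choose_one_right, add_mul, one_mul,
      pow_add]
    set R := (-1) ^ d * q ^ d.choose 2 * qPochNat (q ^ (N - d + 1)) q d
    linear_combination (q ^ N * (1 - (q ^ N)⁻¹ * q ^ d)) * ih (by omega) + R * hcancel - R * hN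

section HalfPowers

variable {q s : ℂ}

theorem zpow_eq_zpow_two_mul (hs : s ^ 2 = q) (z : ℤ) : q ^ z = s ^ (2 * z) := by
  rw [zpow_mul, ← hs]
  norm_cast

theorem two_mul_choose_two_eq (j : ℕ) : 2 * (j.choose 2 : ℤ) = j * (j - 1) := by
  induction j with
  | zero => simp
  | succ j ih =>
    rw [Nat.choose_succ_succ', Nat.choose_one_right]
    push_cast
    linear_combination ih

theorem pow_choose_two_eq_zpow (hs : s ^ 2 = q) (j : ℕ) :
    q ^ j.choose 2 = s ^ ((j : ℤ) * (j - 1)) := by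
  rw [← zpow_natCast, zpow_eq_zpow_two_mul hs, two_mul_choose_two_eq]

theorem sum_qbinom_mul_zpow (hs : s ^ 2 = q) (hs0 : s ≠ 0) (k : ℕ) (ℓ : ℤ) :
    ∑ j ∈ range (k + 1), (-1) ^ j * s ^ ((j : ℤ) * (j + ℓ)) * qbinom q k j =
      qPochNat (s ^ (ℓ + 1)) q k := by
  rw [← sum_qbinom_mul_pow]
  refine sum_congr rfl fun j _ => ?_
  rw [pow_choose_two_eq_zpow hs, ← zpow_natCast (s ^ (ℓ + 1)), ← zpow_mul,
    show (j : ℤ) * (j + ℓ) = j * (j - 1) + (ℓ + 1) * j by ring, zpow_add₀ hs0]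
  ring

end HalfPowers

theorem figure_eight_inner_sum {q s : ℂ} (hs : s ^ 2 = q) (hs0 : s ≠ 0)
    (hfac : ∀ m : ℕ, qfac q m ≠ 0) {n d : ℕ} (hd : d ≤ n) :
    ∑ d2 ∈ range (d + 1),
        (-1) ^ (d + d2) *
          s ^ ((d2 : ℤ) * ((d2 : ℤ) - 2 * d - 2 * n - 3) + (d : ℤ) * ((d : ℤ) + 1)) *
          qfac q d * qfac q n / (qfac q d2 * qfac q (d - d2) * qfac q (n - d))
      = q ^ (-((n : ℤ) + 1) * d) * qPochNat (q ^ (n + 2)) q d *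
          qPochNat (q ^ (n - d + 1)) q d := by
  have hq : q ≠ 0 := hs ▸ pow_ne_zero 2 hs0
  set ℓ : ℤ := -2 * (d + n + 1 : ℕ) - 1
  have hterm : ∀ d2 ∈ range (d + 1),
      (-1) ^ (d + d2) *
          s ^ ((d2 : ℤ) * ((d2 : ℤ) - 2 * d - 2 * n - 3) + (d : ℤ) * ((d : ℤ) + 1)) *
          qfac q d * qfac q n / (qfac q d2 * qfac q (d - d2) * qfac q (n - d)) =
        (-1) ^ d * s ^ ((d : ℤ) * (d + 1)) * qPochNat (q ^ (n - d + 1)) q d *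
          ((-1) ^ d2 * s ^ ((d2 : ℤ) * (d2 + ℓ)) * qbinom q d d2) := by
    intro d2 hd2
    rw [qbinom_eq_div q (mem_range_succ_iff.mp hd2) (hfac _) (hfac _),
      ← qfac_div_qfac_sub q hd (hfac _),
      show (d2 : ℤ) * (d2 - 2 * d - 2 * n - 3) = d2 * (d2 + ℓ) by simp only [ℓ]; push_cast; ring,
      zpow_add₀ hs0]
    ring
  have hx : s ^ (ℓ + 1) = (q ^ (d + n + 1))⁻¹ := by
    rw [show ℓ + 1 = -(2 * (d + n + 1 : ℕ)) by simp only [ℓ]; ring, zpow_neg,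
      ← zpow_eq_zpow_two_mul hs, zpow_natCast]
  have hreflect := pow_mul_qPochNat_inv_pow hq (d := d) (N := d + n + 1) (by omega)
  rw [show d + n + 1 - d + 1 = n + 2 by omega] at hreflect
  have hsign : (-1 : ℂ) ^ d * (-1) ^ d = 1 := by rw [← mul_pow]; norm_num
  have hexp : q ^ (d * (d + n + 1)) * q ^ (-((n : ℤ) + 1) * d) =
      s ^ ((d : ℤ) * (d + 1)) * q ^ d.choose 2 := by
    rw [pow_choose_two_eq_zpow hs, ← zpow_natCast q, zpow_eq_zpow_two_mul hs,
      zpow_eq_zpow_two_mul hs, ← zpow_add₀ hs0, ← zpow_add₀ hs0]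
    congr 1
    push_cast
    ring
  rw [sum_congr rfl hterm, ← mul_sum, sum_qbinom_mul_zpow hs hs0, hx]
  refine mul_left_cancel₀ (pow_ne_zero (d * (d + n + 1)) hq) ?_
  set P := qPochNat (q ^ (n - d + 1)) q d
  set Q := qPochNat (q ^ (n + 2)) q d
  linear_combination ((-1) ^ d * s ^ ((d : ℤ) * (d + 1)) * P) * hreflect +
    (s ^ ((d : ℤ) * (d + 1)) * q ^ d.choose 2 * P * Q) * hsign - P * Q * hexp

/-- The double-sum formula for the normalized colored Jones polynomial of the figure-eight
knot equals the Habiro/Masbaum single-sum formula; `s` is a fixed square root of `q`. -/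
theorem figure_eight_double_single (q s : ℂ) (hs : s ^ 2 = q) (hs0 : s ≠ 0)
    (hfac : ∀ m : ℕ, qfac q m ≠ 0) (n : ℕ) :
    ∑ d1 ∈ Finset.range (n + 1), ∑ d2 ∈ Finset.range (d1 + 1),
        (-1) ^ (d1 + d2) *
          s ^ ((d2 : ℤ) * ((d2 : ℤ) - 2 * d1 - 2 * n - 3) + (d1 : ℤ) * ((d1 : ℤ) + 1)) *
          qfac q d1 * qfac q n / (qfac q d2 * qfac q (d1 - d2) * qfac q (n - d1))
      = ∑ d1 ∈ Finset.range (n + 1),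
          q ^ (-((n : ℤ) + 1) * d1) * qPochNat (q ^ (n + 2)) q d1 *
            qPochNat (q ^ (n - d1 + 1)) q d1 :=
  sum_congr rfl fun _ hd1 => figure_eight_inner_sum hs hs0 hfac (mem_range_succ_iff.mp hd1)
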